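/- arXiv:2504.15727 — 6 statements merged into one kernel-verified Lean document; each statement's English description precedes it below -/
import Mathlib

section
/- (Zhuchok) Let (D,⊣) be an arbitrary semigroup and define the dual operation ⊢ on D by x ⊢ y = y ⊣ x. Then (D,⊣,⊢) is a dimonoid if and only if (D,⊣) is right commutative, i.e., s ⊣ x ⊣ y = s ⊣ y ⊣ x for all s,x,y ∈ D. -/
/-- A dimonoid: two associative operations `ld` (⊣) and `rd` (⊢) satisfying
axioms (D1), (D2), (D3). -/
def IsDimonoid {D : Type*} (ld rd : D → D → D) : Prop :=
  (∀ x y z, ld (ld x y) z = ld x (ld y z)) ∧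
  (∀ x y z, rd (rd x y) z = rd x (rd y z)) ∧
  (∀ x y z, ld (ld x y) z = ld x (rd y z)) ∧
  (∀ x y z, ld (rd x y) z = rd x (ld y z)) ∧
  (∀ x y z, rd (ld x y) z = rd x (rd y z))

/-- (Zhuchok) For a semigroup `(D,⊣)` and the dual operation `x ⊢ y = y ⊣ x`,
the structure `(D,⊣,⊢)` is a dimonoid iff `(D,⊣)` is right commutative. -/
theorem dimonoid_iff_rightCommutative {D : Type*} (ld rd : D → D → D)
    (hassoc : ∀ x y z, ld (ld x y) z = ld x (ld y z))
    (hrd : ∀ x y, rd x y = ld y x) :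
    IsDimonoid ld rd ↔ ∀ s x y, ld (ld s x) y = ld (ld s y) x := by
  constructor
  · rintro ⟨h1, h2, h3, h4, h5⟩ s x y
    rw [hassoc, hassoc, ← hassoc, h3, hrd]
  · intro hrc
    refine ⟨hassoc, ?_, ?_, ?_, ?_⟩ <;> intro x y z <;> simp only [hrd]
    · rw [← hassoc, hrc]
    · rw [hassoc, ← hassoc, hrc, hassoc]
    · exact hrc y x z
    · rw [← hassoc, hrc, hassoc]
end

section
/- Let A be a nonempty proper subset of a set D, let a ∈ A, and define the operation ⊣ on D by: x ⊣ y = x if x ∈ A, and x ⊣ y = a if x ∉ A. Then ⊣ is associative and right commutative, and a bijection f : D → D is an automorphism of (D,⊣) if and only if f(A) = A and f(a) = a; hence the automorphism group of the semigroup LO_{A←D} = (D,⊣) is isomorphic to S_{A∖{a}} × S_{D∖A}. -/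
/-- The automorphism group of a magma `(D, op)`, as a subgroup of `Equiv.Perm D`. -/
def semigroupAutGroup {D : Type*} (op : D → D → D) : Subgroup (Equiv.Perm D) where
  carrier := {f : Equiv.Perm D | ∀ x y, f (op x y) = op (f x) (f y)}
  one_mem' := fun _ _ => rfl
  mul_mem' := by
    intro f g hf hg
    simp only [Set.mem_setOf_eq] at hf hg ⊢
    intro x y
    simp [Equiv.Perm.mul_apply, hg, hf]
  inv_mem' := by
    intro f hf
    simp only [Set.mem_setOf_eq] at hf ⊢
    intro x y
    apply f.injective
    rw [hf]
    simp

/-- The automorphism group of a dimonoid `(D, ld, rd)`. -/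
def dimonoidAutGroup {D : Type*} (ld rd : D → D → D) : Subgroup (Equiv.Perm D) :=
  semigroupAutGroup ld ⊓ semigroupAutGroup rd

open Equiv MulAction Pointwise

namespace Equiv.Perm

variable {α : Type*} {s t : Set α}

theorem ofSubtype_mem_stabilizer_of_disjoint [DecidablePred (· ∈ s)] (hst : _root_.Disjoint s t)
    (g : Perm s) : ofSubtype g ∈ stabilizer (Perm α) t := by
  refine mem_stabilizer_set.2 fun x => ?_
  by_cases hx : x ∈ s
  · have hgx : (g ⟨x, hx⟩ : α) ∉ t := Set.disjoint_left.1 hst (g ⟨x, hx⟩).2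
    simp only [Perm.smul_def, ofSubtype_apply_of_mem g hx, hgx, Set.disjoint_left.1 hst hx]
  · rw [Perm.smul_def, ofSubtype_apply_of_not_mem g hx]

theorem mem_stabilizer_sdiff_singleton_inf_compl_iff {a : α} (ha : a ∈ s) (f : Perm α) :
    f ∈ stabilizer (Perm α) (s \ {a}) ⊓ stabilizer (Perm α) sᶜ ↔
      f ∈ stabilizer (Perm α) s ∧ f a = a := by
  simp only [Subgroup.mem_inf, mem_stabilizer_set, Perm.smul_def, Set.mem_compl_iff, not_iff_not,
    Set.mem_sdiff, Set.mem_singleton_iff]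
  constructor
  · rintro ⟨hdiff, hs⟩
    exact ⟨hs, by_contra fun hfa => ((hdiff a).1 ⟨(hs a).2 ha, hfa⟩).2 rfl⟩
  · rintro ⟨hs, hfa⟩
    exact ⟨fun x => and_congr (hs x) (not_congr (f.injective.eq_iff' hfa)), hs⟩

def stabilizerInfStabilizerEquivProd [DecidablePred (· ∈ s)] [DecidablePred (· ∈ t)]
    (hst : _root_.Disjoint s t) (hrest : (s ∪ t)ᶜ.Subsingleton) :
    ↥(stabilizer (Perm α) s ⊓ stabilizer (Perm α) t) ≃* Perm s × Perm t where
  toFun f := (f.1.subtypePerm (mem_stabilizer_set.1 f.2.1),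
    f.1.subtypePerm (mem_stabilizer_set.1 f.2.2))
  invFun gh := ⟨ofSubtype gh.1 * ofSubtype gh.2,
    mul_mem ⟨ofSubtype_mem_stabilizer gh.1, ofSubtype_mem_stabilizer_of_disjoint hst gh.1⟩
      ⟨ofSubtype_mem_stabilizer_of_disjoint hst.symm gh.2, ofSubtype_mem_stabilizer gh.2⟩⟩
  left_inv := by
    rintro ⟨f, hf⟩
    have hfs : ∀ x, f x ∈ s ↔ x ∈ s := mem_stabilizer_set.1 (Subgroup.mem_inf.1 hf).1
    have hft : ∀ x, f x ∈ t ↔ x ∈ t := mem_stabilizer_set.1 (Subgroup.mem_inf.1 hf).2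
    refine Subtype.ext (ext fun x => ?_)
    simp only [coe_mul, Function.comp_apply]
    by_cases hxs : x ∈ s
    · rw [ofSubtype_apply_of_not_mem _ (Set.disjoint_left.1 hst hxs),
        ofSubtype_subtypePerm_of_mem _ hxs]
    by_cases hxt : x ∈ t
    · rw [ofSubtype_subtypePerm_of_mem _ hxt, ofSubtype_apply_of_not_mem]
      exact Set.disjoint_right.1 hst ((hft x).2 hxt)
    · have hfx : f x = x := hrest (by simp [hfs, hft, hxs, hxt]) (by simp [hxs, hxt])
      rw [ofSubtype_apply_of_not_mem _ hxt, ofSubtype_apply_of_not_mem _ hxs, hfx]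
  right_inv gh := by
    ext x
    · simp [ofSubtype_apply_of_not_mem gh.2 (Set.disjoint_left.1 hst x.2)]
    · simp [ofSubtype_apply_of_not_mem gh.1 (Set.disjoint_right.1 hst (gh.2 x).2)]
  map_mul' _ _ := rfl

end Equiv.Perm

section LO

variable {D : Type*}

def loMul (A : Set D) [DecidablePred (· ∈ A)] (a x _y : D) : D :=
  if x ∈ A then x else a

variable {A : Set D} [DecidablePred (· ∈ A)] {a : D}

theorem loMul_of_mem {x : D} (hx : x ∈ A) (y : D) : loMul A a x y = x := if_pos hx

theorem loMul_of_notMem {x : D} (hx : x ∉ A) (y : D) : loMul A a x y = a := if_neg hx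

theorem loMul_mem (ha : a ∈ A) (x y : D) : loMul A a x y ∈ A := by
  unfold loMul
  split_ifs with hx
  exacts [hx, ha]

theorem loMul_assoc (ha : a ∈ A) (x y z : D) :
    loMul A a (loMul A a x y) z = loMul A a x (loMul A a y z) :=
  loMul_of_mem (loMul_mem ha x y) z

theorem loMul_right_comm (ha : a ∈ A) (s x y : D) :
    loMul A a (loMul A a s x) y = loMul A a (loMul A a s y) x :=
  (loMul_of_mem (loMul_mem ha s x) y).trans (loMul_of_mem (loMul_mem ha s y) x).symm

theorem loMul_self_eq_self_iff (ha : a ∈ A) (x : D) : loMul A a x x = x ↔ x ∈ A := by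
  refine ⟨fun hx => ?_, fun hx => loMul_of_mem hx x⟩
  rw [← hx]
  exact loMul_mem ha x x

theorem map_loMul_iff (ha : a ∈ A) (hA : A ≠ Set.univ) (f : Perm D) :
    (∀ x y, f (loMul A a x y) = loMul A a (f x) (f y)) ↔
      f ∈ stabilizer (Perm D) A ∧ f a = a := by
  simp only [mem_stabilizer_set, Perm.smul_def]
  constructor
  · intro hf
    have hfA : ∀ x, f x ∈ A ↔ x ∈ A := fun x => by
      rw [← loMul_self_eq_self_iff ha, ← hf, f.injective.eq_iff, loMul_self_eq_self_iff ha]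
    obtain ⟨b, hb⟩ := (Set.ne_univ_iff_exists_notMem A).1 hA
    have hfb := hf b b
    rw [loMul_of_notMem hb, loMul_of_notMem (mt (hfA b).1 hb)] at hfb
    exact ⟨hfA, hfb⟩
  · rintro ⟨hfA, hfa⟩ x y
    by_cases hx : x ∈ A
    · rw [loMul_of_mem hx, loMul_of_mem ((hfA x).2 hx)]
    · rw [loMul_of_notMem hx, loMul_of_notMem (mt (hfA x).1 hx), hfa]

theorem semigroupAutGroup_loMul (ha : a ∈ A) (hA : A ≠ Set.univ) :
    semigroupAutGroup (loMul A a) = stabilizer (Perm D) (A \ {a}) ⊓ stabilizer (Perm D) Aᶜ := by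
  ext f
  rw [Perm.mem_stabilizer_sdiff_singleton_inf_compl_iff ha, ← map_loMul_iff ha hA]
  rfl

end LO

theorem LO_A_D_semigroup_general {D : Type*} (A : Set D) (hAp : A ≠ Set.univ)
    (a : D) (ha : a ∈ A) (ld : D → D → D)
    (hld1 : ∀ x y, x ∈ A → ld x y = x)
    (hld2 : ∀ x y, x ∉ A → ld x y = a) :
    (∀ x y z, ld (ld x y) z = ld x (ld y z)) ∧
    (∀ s x y, ld (ld s x) y = ld (ld s y) x) ∧
    (∀ f : Equiv.Perm D,
      (∀ x y, f (ld x y) = ld (f x) (f y)) ↔ (⇑f '' A = A ∧ f a = a)) ∧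
    Nonempty (↥(semigroupAutGroup ld) ≃* Equiv.Perm ↥(A \ {a}) × Equiv.Perm ↥Aᶜ) := by
  classical
  obtain rfl : ld = loMul A a := funext₂ fun x y => by
    by_cases hx : x ∈ A
    · rw [hld1 x y hx, loMul_of_mem hx]
    · rw [hld2 x y hx, loMul_of_notMem hx]
  have hcover : (A \ {a} ∪ Aᶜ)ᶜ.Subsingleton := (Set.subsingleton_singleton (a := a)).anti <|
    Set.compl_subset_comm.1 fun x hxa => (em (x ∈ A)).imp (fun hxA => ⟨hxA, hxa⟩) id
  refine ⟨loMul_assoc ha, loMul_right_comm ha, fun f =>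
    (map_loMul_iff ha hAp f).trans (and_congr_left' mem_stabilizer_iff), ⟨?_⟩⟩
  exact (MulEquiv.subgroupCongr (semigroupAutGroup_loMul ha hAp)).trans
    (Perm.stabilizerInfStabilizerEquivProd (disjoint_compl_right.mono_left Set.sdiff_subset) hcover)

/-- For a nonempty proper subset `A ⊆ D` and `a ∈ A`, the semigroup
`LO_{A←D}` with `x ⊣ y = x` for `x ∈ A` and `x ⊣ y = a` for `x ∉ A`
is associative and right commutative; its automorphisms are exactly the
bijections `f` with `f(A) = A` and `f(a) = a`, and its automorphism group is
isomorphic to `S_{A∖{a}} × S_{D∖A}`. -/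
theorem LO_A_D_semigroup {D : Type*} (A : Set D) (hA : A.Nonempty) (hAp : A ≠ Set.univ)
    (a : D) (ha : a ∈ A) (ld : D → D → D)
    (hld1 : ∀ x y, x ∈ A → ld x y = x)
    (hld2 : ∀ x y, x ∉ A → ld x y = a) :
    (∀ x y z, ld (ld x y) z = ld x (ld y z)) ∧
    (∀ s x y, ld (ld s x) y = ld (ld s y) x) ∧
    (∀ f : Equiv.Perm D,
      (∀ x y, f (ld x y) = ld (f x) (f y)) ↔ (⇑f '' A = A ∧ f a = a)) ∧
    Nonempty (↥(semigroupAutGroup ld) ≃* Equiv.Perm ↥(A \ {a}) × Equiv.Perm ↥Aᶜ) :=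
  LO_A_D_semigroup_general A hAp a ha ld hld1 hld2
end

section
/- Let D be a set with |D| ≥ 2, let a, c be distinct elements of D, let ⊣ be the operation on D given by a ⊣ a = a, a ⊣ y = c for y ≠ a, and x ⊣ y = x for x ≠ a, and let ⊢ be the dual operation x ⊢ y = y ⊣ x. Then (D,⊣,⊢) is an abelian dimonoid whose halo equals {a}, a bijection f : D → D is an automorphism of (D,⊣,⊢) if and only if f(a) = a and f(c) = c; moreover, if |D| ≥ 3, then (D,⊣,⊢) is not commutative. -/
/-!
Every element other than `a` is a left zero of `⊣`, and `a ⊣ y` lands in `{a, c}`; so `⊣` is an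
associative operation with `(x ⊣ y) ⊣ z = (x ⊣ z) ⊣ y`. For any such operation the pair
`(⊣, flip ⊣)` is a dimonoid, and its halo, its automorphisms and its commutativity are those of
`⊣` alone. For `⊣` these are read off directly: `a` is its only right identity, an automorphism
must fix `a` (its only non-left-zero) and hence `c = a ⊣ c`, and two distinct left zeros do not
commute.
-/

/-- The paper's operation `LOB_D`. -/
def lob {D : Type*} [DecidableEq D] (a c : D) (x y : D) : D :=
  if x = a then (if y = a then a else c) else x

theorem isDimonoid_flip {D : Type*} (op : D → D → D)
    (assoc : ∀ x y z, op (op x y) z = op x (op y z))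
    (right_comm : ∀ x y z, op (op x y) z = op (op x z) y) :
    IsDimonoid op (flip op) := by
  refine ⟨assoc, fun x y z => (assoc z y x).symm, fun x y z => ?_, fun x y z => right_comm y x z,
    fun x y z => ?_⟩
  · simp only [flip, right_comm x y z, assoc]
  · simp only [flip, ← assoc, right_comm z x y]

theorem exists_ne_ne_of_three {D : Type*} (a : D) (h : ∃ x y z : D, x ≠ y ∧ y ≠ z ∧ x ≠ z) :
    ∃ u v : D, u ≠ a ∧ v ≠ a ∧ u ≠ v := by
  obtain ⟨x, y, z, hxy, hyz, hxz⟩ := h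
  by_cases hx : x = a
  · subst hx
    exact ⟨y, z, hxy.symm, hxz.symm, hyz⟩
  by_cases hy : y = a
  · subst hy
    exact ⟨x, z, hx, hyz.symm, hxz⟩
  · exact ⟨x, y, hx, hy, hxy⟩

theorem forall_map_flip_iff {D : Type*} (f : D → D) (op : D → D → D) :
    (∀ x y, f (flip op x y) = flip op (f x) (f y)) ↔ ∀ x y, f (op x y) = op (f x) (f y) :=
  forall_comm

namespace lob

variable {D : Type*} [DecidableEq D] {a c : D}

theorem self_self : lob a c a a = a := if_pos rfl |>.trans (if_pos rfl)

theorem self_of_ne {y : D} (hy : y ≠ a) : lob a c a y = c :=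
  if_pos rfl |>.trans (if_neg hy)

theorem of_ne {x : D} (hx : x ≠ a) (y : D) : lob a c x y = x := if_neg hx

theorem eq_of_forall {ld : D → D → D} (hld1 : ld a a = a) (hld2 : ∀ y, y ≠ a → ld a y = c)
    (hld3 : ∀ x y, x ≠ a → ld x y = x) : ld = lob a c := by
  funext x y
  by_cases hx : x = a
  · subst hx
    by_cases hy : y = x
    · rw [hy, hld1, self_self]
    · rw [hld2 y hy, self_of_ne hy]
  · rw [hld3 x y hx, of_ne hx]

theorem assoc (hac : a ≠ c) (x y z : D) : lob a c (lob a c x y) z = lob a c x (lob a c y z) := by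
  unfold lob
  by_cases hx : x = a <;> by_cases hy : y = a <;> by_cases hz : z = a <;>
    simp [hx, hy, hz, hac.symm]

theorem right_comm (hac : a ≠ c) (x y z : D) :
    lob a c (lob a c x y) z = lob a c (lob a c x z) y := by
  unfold lob
  by_cases hx : x = a <;> by_cases hy : y = a <;> by_cases hz : z = a <;>
    simp [hx, hy, hz, hac.symm]

theorem forall_eq_iff (hac : a ≠ c) (e : D) : (∀ d, lob a c d e = d) ↔ e = a := by
  refine ⟨fun h => by_contra fun he => hac (self_of_ne he ▸ h a).symm, ?_⟩
  intro he d
  rw [he]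
  by_cases hd : d = a
  · rw [hd, self_self]
  · exact of_ne hd a

theorem map_iff (hac : a ≠ c) (f : Equiv.Perm D) :
    (∀ x y, f (lob a c x y) = lob a c (f x) (f y)) ↔ f a = a ∧ f c = c := by
  have hf_ne : ∀ {x}, f a = a → x ≠ a → f x ≠ a := fun hfa hx h =>
    hx (f.injective (h.trans hfa.symm))
  constructor
  · intro hf
    have hfa : f a = a := by
      by_contra hfa
      have hb : f (f.symm a) = a := f.apply_symm_apply a
      have hba : f.symm a ≠ a := fun h => hfa (by rwa [h] at hb)
      -- `f (a ⊣ b) = f a ⊣ a` for `b = f⁻¹ a` forces `f c = f a`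
      have h := hf a (f.symm a)
      rw [self_of_ne hba, hb, of_ne hfa] at h
      exact hac (f.injective h).symm
    have h := hf a c
    rw [self_of_ne hac.symm, hfa, self_of_ne (hf_ne hfa hac.symm)] at h
    exact ⟨hfa, h⟩
  · rintro ⟨hfa, hfc⟩ x y
    by_cases hx : x = a
    · subst hx
      by_cases hy : y = x
      · rw [hy, self_self, hfa, self_self]
      · rw [self_of_ne hy, hfc, hfa, self_of_ne (hf_ne hfa hy)]
    · rw [of_ne hx, of_ne (hf_ne hfa hx)]

theorem not_comm_of_ne {x y : D} (hx : x ≠ a) (hy : y ≠ a) (hxy : x ≠ y) :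
    lob a c x y ≠ lob a c y x := by
  rwa [of_ne hx, of_ne hy]

end lob

/-- The dimonoid `LOB_D ⋈ ROB_D` is an abelian dimonoid whose halo equals `{a}`;
its automorphisms are exactly the bijections fixing `a` and `c`; and if
`|D| ≥ 3` it is not commutative. -/
theorem LOB_D_dimonoid {D : Type*} (a c : D) (hac : a ≠ c) (ld rd : D → D → D)
    (hld1 : ld a a = a)
    (hld2 : ∀ y, y ≠ a → ld a y = c)
    (hld3 : ∀ x y, x ≠ a → ld x y = x)
    (hrd : ∀ x y, rd x y = ld y x) :
    IsDimonoid ld rd ∧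
    (∀ x y, ld x y = rd y x) ∧
    {e : D | ∀ d, rd e d = d ∧ ld d e = d} = {a} ∧
    (∀ f : Equiv.Perm D,
      ((∀ x y, f (ld x y) = ld (f x) (f y)) ∧ (∀ x y, f (rd x y) = rd (f x) (f y))) ↔
      (f a = a ∧ f c = c)) ∧
    ((∃ x y z : D, x ≠ y ∧ y ≠ z ∧ x ≠ z) →
      ¬ ((∀ x y, ld x y = ld y x) ∧ (∀ x y, rd x y = rd y x))) := by
  classical
  obtain rfl : rd = flip ld := funext₂ hrd
  obtain rfl := lob.eq_of_forall hld1 hld2 hld3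
  refine ⟨isDimonoid_flip _ (lob.assoc hac) (lob.right_comm hac), fun _ _ => rfl, ?_, ?_, ?_⟩
  · ext e
    simpa only [flip, and_self, Set.mem_ofPred_eq, Set.mem_singleton_iff] using
      lob.forall_eq_iff hac e
  · intro f
    rw [forall_map_flip_iff, and_self, lob.map_iff hac]
  · rintro h ⟨hcomm, -⟩
    obtain ⟨u, v, hu, hv, huv⟩ := exists_ne_ne_of_three a h
    exact lob.not_comm_of_ne hu hv huv (hcomm u v)
end

section
/- Let D be a set with |D| > 2 and let a, c be distinct elements of D. Define two operations on D by: x ⊣ y = a if x = y = a, x ⊣ y = c if x = a and y ≠ a, and x ⊣ y = x if x ≠ a; and x ⊢ y = a if x = y = a, and x ⊢ y = c otherwise. Then (D,⊣,⊢) is a dimonoid which is nonabelian and noncommutative, has empty halo (no bar-units), and a bijection f : D → D is an automorphism of (D,⊣,⊢) if and only if f(a) = a and f(c) = c; hence its automorphism group is isomorphic to S_{D∖{a,c}}. -/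
/-!
The hypotheses determine both operations, so the dimonoid axioms and the negative properties are
finite case checks. For automorphisms, the point is that `a` is the only element that is not a left
zero of `⊣` (since `a ⊣ c = c`): an automorphism of `⊣` must therefore fix `a`, and then also
`c = a ⊣ c`. Conversely a bijection fixing `a` and `c` respects every case distinction in the
definitions. So the automorphism group is the pointwise stabiliser of `{a, c}` in `S_D`, which is
`S_{D ∖ {a, c}}` by extending permutations by the identity.
-/

namespace Equiv.Perm

open MulAction

variable {α : Type*}

theorem range_ofSubtype_eq_fixingSubgroup (s : Set α) [DecidablePred (· ∈ sᶜ)] :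
    (ofSubtype : Perm ↥sᶜ →* Perm α).range = fixingSubgroup (Perm α) s := by
  ext g
  rw [mem_fixingSubgroup_iff]
  constructor
  · rintro ⟨k, rfl⟩ x hx
    exact ofSubtype_apply_of_not_mem k (not_not_intro hx)
  · intro hg
    let g' : { f : Perm α // ∀ x, x ∉ sᶜ → f x = x } := ⟨g, fun x hx => hg x (not_not.mp hx)⟩
    exact ⟨(Perm.subtypeEquivSubtypePerm _).symm g',
      congrArg Subtype.val ((Perm.subtypeEquivSubtypePerm _).apply_symm_apply g')⟩

noncomputable def fixingSubgroupEquivPermCompl (s : Set α) [DecidablePred (· ∈ sᶜ)] :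
    fixingSubgroup (Perm α) s ≃* Perm ↥sᶜ :=
  ((MonoidHom.ofInjective ofSubtype_injective).trans
    (MulEquiv.subgroupCongr (range_ofSubtype_eq_fixingSubgroup s))).symm

end Equiv.Perm

namespace LOBNull

open Equiv MulAction

variable {D : Type*} [DecidableEq D] (a c : D)

/-- `lobOp a c` is the operation of the paper's `LOB_D` and `nullOp a c` that of `O_D^{a}`. -/
def lobOp (x y : D) : D := if x = a then if y = a then a else c else x

def nullOp (x y : D) : D := if x = a ∧ y = a then a else c

variable {a c}

theorem lobOp_of_ne {x : D} (hx : x ≠ a) (y : D) : lobOp a c x y = x := if_neg hx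

theorem lobOp_left_of_ne {y : D} (hy : y ≠ a) : lobOp a c a y = c := by simp [lobOp, hy]

theorem nullOp_of_ne_right (x : D) {y : D} (hy : y ≠ a) : nullOp a c x y = c := by
  simp [nullOp, hy]

theorem eq_lobOp {ld : D → D → D} (h₁ : ld a a = a) (h₂ : ∀ y, y ≠ a → ld a y = c)
    (h₃ : ∀ x y, x ≠ a → ld x y = x) : ld = lobOp a c := by
  ext x y
  unfold lobOp
  split_ifs with hx hy
  · rw [hx, hy, h₁]
  · rw [hx, h₂ y hy]
  · exact h₃ x y hx

theorem eq_nullOp {rd : D → D → D} (h₁ : rd a a = a)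
    (h₂ : ∀ x y, ¬ (x = a ∧ y = a) → rd x y = c) : rd = nullOp a c := by
  ext x y
  unfold nullOp
  split_ifs with h
  · rw [h.1, h.2, h₁]
  · exact h₂ x y h

variable (a c) in
theorem isDimonoid_lobOp_nullOp : IsDimonoid (lobOp a c) (nullOp a c) := by
  refine ⟨?_, ?_, ?_, ?_, ?_⟩ <;> intro x y z <;> simp only [lobOp, nullOp] <;> split_ifs <;>
    simp_all

theorem fixes_of_map_lobOp (hac : a ≠ c) {f : Perm D}
    (hf : ∀ x y, f (lobOp a c x y) = lobOp a c (f x) (f y)) : f a = a ∧ f c = c := by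
  have hfc : f c = lobOp a c (f a) (f c) := by rw [← hf, lobOp_left_of_ne hac.symm]
  have hfa : f a = a := by
    by_contra hfa
    rw [lobOp_of_ne hfa] at hfc
    exact hac (f.injective hfc).symm
  refine ⟨hfa, ?_⟩
  rwa [hfa, lobOp_left_of_ne ((f.injective.eq_iff' hfa).not.mpr hac.symm)] at hfc

theorem map_lobOp_of_fixes {f : Perm D} (hfa : f a = a) (hfc : f c = c) (x y : D) :
    f (lobOp a c x y) = lobOp a c (f x) (f y) := by
  simp only [lobOp, f.injective.eq_iff' hfa]
  split_ifs <;> simp_all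

theorem map_nullOp_of_fixes {f : Perm D} (hfa : f a = a) (hfc : f c = c) (x y : D) :
    f (nullOp a c x y) = nullOp a c (f x) (f y) := by
  simp only [nullOp, f.injective.eq_iff' hfa]
  split_ifs <;> assumption

theorem map_lobOp_nullOp_iff (hac : a ≠ c) (f : Perm D) :
    ((∀ x y, f (lobOp a c x y) = lobOp a c (f x) (f y)) ∧
      (∀ x y, f (nullOp a c x y) = nullOp a c (f x) (f y))) ↔ f a = a ∧ f c = c :=
  ⟨fun hf => fixes_of_map_lobOp hac hf.1, fun ⟨hfa, hfc⟩ =>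
    ⟨map_lobOp_of_fixes hfa hfc, map_nullOp_of_fixes hfa hfc⟩⟩

theorem dimonoidAutGroup_lobOp_nullOp (hac : a ≠ c) :
    dimonoidAutGroup (lobOp a c) (nullOp a c) = fixingSubgroup (Perm D) {a, c} := by
  ext f
  simp only [mem_fixingSubgroup_iff, Set.forall_mem_insert, Set.mem_singleton_iff, forall_eq,
    Perm.smul_def]
  exact map_lobOp_nullOp_iff hac f

end LOBNull

open LOBNull in
/-- The dimonoid `LOB_D ⋈ O_D^{{a}}` (for `|D| > 2` and distinct `a, c`):
with `x ⊣ y` given by the `LOB_D` operation and `x ⊢ y = a` if `x = y = a`,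
`x ⊢ y = c` otherwise, one gets a nonabelian noncommutative dimonoid with empty
halo, whose automorphisms are exactly the bijections fixing `a` and `c`, so its
automorphism group is isomorphic to `S_{D∖{a,c}}`. -/
theorem LOB_D_null_dimonoid {D : Type*} (a c : D) (hac : a ≠ c)
    (hD : ∃ b : D, b ≠ a ∧ b ≠ c) (ld rd : D → D → D)
    (hld1 : ld a a = a)
    (hld2 : ∀ y, y ≠ a → ld a y = c)
    (hld3 : ∀ x y, x ≠ a → ld x y = x)
    (hrd1 : rd a a = a)
    (hrd2 : ∀ x y, ¬ (x = a ∧ y = a) → rd x y = c) :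
    IsDimonoid ld rd ∧
    (¬ ∀ x y, ld x y = rd y x) ∧
    (¬ ((∀ x y, ld x y = ld y x) ∧ (∀ x y, rd x y = rd y x))) ∧
    (¬ ∃ e : D, ∀ d, rd e d = d ∧ ld d e = d) ∧
    (∀ f : Equiv.Perm D,
      ((∀ x y, f (ld x y) = ld (f x) (f y)) ∧ (∀ x y, f (rd x y) = rd (f x) (f y))) ↔
      (f a = a ∧ f c = c)) ∧
    Nonempty (↥(dimonoidAutGroup ld rd) ≃* Equiv.Perm ↥(({a, c} : Set D)ᶜ)) := by
  classical
  obtain ⟨b, hba, hbc⟩ := hD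
  obtain rfl := eq_lobOp hld1 hld2 hld3
  obtain rfl := eq_nullOp hrd1 hrd2
  have hlob_ba : lobOp a c b a = b := lobOp_of_ne hba a
  refine ⟨isDimonoid_lobOp_nullOp a c, fun h => ?_, fun h => ?_, fun ⟨e, he⟩ => ?_,
    map_lobOp_nullOp_iff hac, ⟨(MulEquiv.subgroupCongr (dimonoidAutGroup_lobOp_nullOp hac)).trans
      (Equiv.Perm.fixingSubgroupEquivPermCompl _)⟩⟩
  · exact hbc (by rw [← hlob_ba, h, nullOp_of_ne_right a hba])
  · exact hbc (by rw [← hlob_ba, h.1, lobOp_left_of_ne hba])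
  · exact hbc (by rw [← (he b).1, nullOp_of_ne_right e hba])
end

section
/- Let D be a nonempty set, let ⊣ be the left zero operation on D (x ⊣ y = x for all x,y), and let ⊢ be an arbitrary associative binary operation on D. Then (D,⊣,⊢) is a dimonoid if and only if (D,⊢) is a rectangular semigroup, i.e., x ⊢ y ⊢ z = x ⊢ z for all x,y,z ∈ D. -/
/-- For the left zero operation `⊣` and an arbitrary associative operation `⊢`
on a nonempty set `D`, the structure `(D,⊣,⊢)` is a dimonoid iff `(D,⊢)` is a
rectangular semigroup. -/
theorem leftZero_dimonoid_iff_rectangular {D : Type*} [Nonempty D] (ld rd : D → D → D)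
    (hld : ∀ x y, ld x y = x)
    (hassoc : ∀ x y z, rd (rd x y) z = rd x (rd y z)) :
    IsDimonoid ld rd ↔ ∀ x y z, rd (rd x y) z = rd x z := by
  constructor
  · rintro ⟨_, _, _, _, h5⟩ x y z
    rw [hassoc, ← h5 x y z, hld]
  · intro hrect
    refine ⟨?_, hassoc, ?_, ?_, ?_⟩ <;> intro x y z <;> simp only [hld]
    rw [← hassoc, hrect]
end

section
/- Let (D,⊣) be a semigroup and let ⊢ be the null operation on D with zero 0 ∈ D (x ⊢ y = 0 for all x,y ∈ D). Then (D,⊣,⊢) is a dimonoid if and only if 0 is a left zero of (D,⊣) (i.e., 0 ⊣ z = 0 for all z ∈ D) and x ⊣ y ⊣ z = x ⊣ 0 for all x,y,z ∈ D. -/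
/-- For a semigroup `(D,⊣)` and the null operation `x ⊢ y = 0`, the structure
`(D,⊣,⊢)` is a dimonoid iff `0` is a left zero of `(D,⊣)` and
`x ⊣ y ⊣ z = x ⊣ 0` for all `x, y, z`. -/
theorem null_dimonoid_iff {D : Type*} (ld rd : D → D → D) (z : D)
    (hassoc : ∀ x y zz, ld (ld x y) zz = ld x (ld y zz))
    (hrd : ∀ x y, rd x y = z) :
    IsDimonoid ld rd ↔ ((∀ s, ld z s = z) ∧ (∀ x y zz, ld (ld x y) zz = ld x z)) := by
  constructor
  · rintro ⟨h1, h2, h3, h4, h5⟩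
    constructor
    · intro s
      have := h4 z z s
      rwa [hrd z z, hrd z (ld z s)] at this
    · intro x y zz
      have := h3 x y zz
      rwa [hrd y zz] at this
  · rintro ⟨hz, hd⟩
    refine ⟨hassoc, ?_, ?_, ?_, ?_⟩
    · intro x y zz; simp [hrd]
    · intro x y zz; rw [hd, hrd]
    · intro x y zz; rw [hrd, hrd, hz]
    · intro x y zz; simp [hrd]
end
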